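/- arXiv:hep-th/9308072 — 2 statements merged into one kernel-verified Lean document; each statement's English description precedes it below -/
import Mathlib

section
/- Let R, R' be Yang-Baxter operators on X, Y and U : X⊗Y → Y⊗X, S : Y⊗X → X⊗Y, T : Y⊗X → Y⊗X linear maps with U, S invertible. Define Q on (X⊕Y)^{⊗2} by Q|_{X⊗X}=R, Q|_{Y⊗Y}=R', Q(x⊗y)=U(x⊗y), Q(y⊗x)=S(y⊗x)+T(y⊗x). If the compatibility conditions (I)–(VI)' hold (U₁₂U₁₃R₂₃=R₂₃U₁₃U₁₂, R₁₂S₁₃S₂₃=S₂₃S₁₃R₁₂, S₁₂R₁₃U₂₃=U₂₃R₁₃S₁₂, T₁₂U₁₃R₂₃=U₂₃R₁₃T₁₂, R₁₂S₁₃T₂₃=S₂₃R₁₃T₁₂, R₁₂T₁₃R₂₃=T₂₃R₁₃T₁₂+S₂₃T₁₃U₁₂, and the mirror equations with R'), then Q satisfies the quantum Yang-Baxter equation. -/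
open TensorProduct LinearMap

section

variable {k : Type*} [Field k]

/-- The quantum Yang-Baxter (braid) relation for an operator on `V ⊗ V`. -/
def Braid {V : Type*} [AddCommGroup V] [Module k V]
    (Q : V ⊗[k] V →ₗ[k] V ⊗[k] V) : Prop :=
  Q.rTensor V ∘ₗ
      ((TensorProduct.assoc k V V V).symm.toLinearMap ∘ₗ Q.lTensor V ∘ₗ
        (TensorProduct.assoc k V V V).toLinearMap) ∘ₗ
      Q.rTensor V =
    ((TensorProduct.assoc k V V V).symm.toLinearMap ∘ₗ Q.lTensor V ∘ₗ
        (TensorProduct.assoc k V V V).toLinearMap) ∘ₗ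
      Q.rTensor V ∘ₗ
      ((TensorProduct.assoc k V V V).symm.toLinearMap ∘ₗ Q.lTensor V ∘ₗ
        (TensorProduct.assoc k V V V).toLinearMap)

variable {A B C D E : Type*} [AddCommGroup A] [Module k A] [AddCommGroup B] [Module k B]
  [AddCommGroup C] [Module k C] [AddCommGroup D] [Module k D] [AddCommGroup E] [Module k E]

/-- `f ⊗ 1`, acting on the first two factors of `(A ⊗ B) ⊗ E`. -/
noncomputable def one2 (f : A ⊗[k] B →ₗ[k] C ⊗[k] D) : (A ⊗[k] B) ⊗[k] E →ₗ[k] (C ⊗[k] D) ⊗[k] E :=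
  f.rTensor E

/-- `1 ⊗ f`, acting on the last two factors of `(E ⊗ A) ⊗ B`. -/
noncomputable def two3 (f : A ⊗[k] B →ₗ[k] C ⊗[k] D) : (E ⊗[k] A) ⊗[k] B →ₗ[k] (E ⊗[k] C) ⊗[k] D :=
  (TensorProduct.assoc k E C D).symm.toLinearMap ∘ₗ f.lTensor E ∘ₗ
    (TensorProduct.assoc k E A B).toLinearMap

end

section Conditions

variable {k : Type*} [Field k] {X Y : Type*}
  [AddCommGroup X] [Module k X] [AddCommGroup Y] [Module k Y]
  (R : X ⊗[k] X →ₗ[k] X ⊗[k] X) (R' : Y ⊗[k] Y →ₗ[k] Y ⊗[k] Y)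
  (U : X ⊗[k] Y →ₗ[k] Y ⊗[k] X) (S : Y ⊗[k] X →ₗ[k] X ⊗[k] Y)
  (T : Y ⊗[k] X →ₗ[k] Y ⊗[k] X)

/-- Condition (I): `(1⊗R)(U⊗1)(1⊗U) = (U⊗1)(1⊗U)(R⊗1)` on `X⊗X⊗Y`. -/
def CondI : Prop :=
  two3 R ∘ₗ one2 U ∘ₗ two3 U = one2 U ∘ₗ two3 U ∘ₗ one2 (E := Y) R

/-- Condition (I)': `(R'⊗1)(1⊗U)(U⊗1) = (1⊗U)(U⊗1)(1⊗R')` on `X⊗Y⊗Y`. -/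
def CondI' : Prop :=
  one2 R' ∘ₗ two3 U ∘ₗ one2 U = two3 U ∘ₗ one2 U ∘ₗ two3 (E := X) R'

/-- Condition (II): `(R⊗1)(1⊗S)(S⊗1) = (1⊗S)(S⊗1)(1⊗R)` on `Y⊗X⊗X`. -/
def CondII : Prop :=
  one2 R ∘ₗ two3 S ∘ₗ one2 S = two3 S ∘ₗ one2 S ∘ₗ two3 (E := Y) R

/-- Condition (II)': `(S⊗1)(1⊗S)(R'⊗1) = (1⊗R')(S⊗1)(1⊗S)` on `Y⊗Y⊗X`. -/
def CondII' : Prop :=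
  one2 S ∘ₗ two3 S ∘ₗ one2 (E := X) R' = two3 R' ∘ₗ one2 S ∘ₗ two3 S

/-- Condition (III): `(S⊗1)(1⊗R)(U⊗1) = (1⊗U)(R⊗1)(1⊗S)` on `X⊗Y⊗X`. -/
def CondIII : Prop :=
  one2 S ∘ₗ two3 R ∘ₗ one2 U = two3 U ∘ₗ one2 R ∘ₗ two3 (E := X) S

/-- Condition (III)': `(U⊗1)(1⊗R')(S⊗1) = (1⊗S)(R'⊗1)(1⊗U)` on `Y⊗X⊗Y`. -/
def CondIII' : Prop :=
  one2 U ∘ₗ two3 R' ∘ₗ one2 S = two3 S ∘ₗ one2 R' ∘ₗ two3 (E := Y) U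

/-- Condition (IV): `(T⊗1)(1⊗R)(U⊗1) = (1⊗R)(U⊗1)(1⊗T)` on `X⊗Y⊗X`. -/
def CondIV : Prop :=
  one2 T ∘ₗ two3 R ∘ₗ one2 U = two3 R ∘ₗ one2 U ∘ₗ two3 (E := X) T

/-- Condition (IV)': `(R'⊗1)(1⊗U)(T⊗1) = (1⊗T)(R'⊗1)(1⊗U)` on `Y⊗X⊗Y`. -/
def CondIV' : Prop :=
  one2 R' ∘ₗ two3 U ∘ₗ one2 T = two3 T ∘ₗ one2 R' ∘ₗ two3 (E := Y) U

/-- Condition (V): `(S⊗1)(1⊗R)(T⊗1) = (1⊗T)(S⊗1)(1⊗R)` on `Y⊗X⊗X`. -/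
def CondV : Prop :=
  one2 S ∘ₗ two3 R ∘ₗ one2 T = two3 T ∘ₗ one2 S ∘ₗ two3 (E := Y) R

/-- Condition (V)': `(T⊗1)(1⊗S)(R'⊗1) = (1⊗S)(R'⊗1)(1⊗T)` on `Y⊗Y⊗X`. -/
def CondV' : Prop :=
  one2 T ∘ₗ two3 S ∘ₗ one2 (E := X) R' = two3 S ∘ₗ one2 R' ∘ₗ two3 T

/-- Condition (VI): `(1⊗R)(T⊗1)(1⊗R) = (T⊗1)(1⊗R)(T⊗1) + (U⊗1)(1⊗T)(S⊗1)`
on `Y⊗X⊗X`. -/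
def CondVI : Prop :=
  two3 R ∘ₗ one2 T ∘ₗ two3 (E := Y) R =
    one2 T ∘ₗ two3 R ∘ₗ one2 T + one2 U ∘ₗ two3 T ∘ₗ one2 S

/-- Condition (VI)': `(R'⊗1)(1⊗T)(R'⊗1) = (1⊗T)(R'⊗1)(1⊗T) + (1⊗U)(T⊗1)(1⊗S)`
on `Y⊗Y⊗X`. -/
def CondVI' : Prop :=
  one2 R' ∘ₗ two3 T ∘ₗ one2 (E := X) R' =
    two3 T ∘ₗ one2 R' ∘ₗ two3 T + two3 U ∘ₗ one2 T ∘ₗ two3 S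

/-- `Q = R ⊕_{U,S,T} R'`, the generalized glueing, defined blockwise. -/
def IsGenGlue (Q : (X × Y) ⊗[k] (X × Y) →ₗ[k] (X × Y) ⊗[k] (X × Y)) : Prop :=
  (Q ∘ₗ TensorProduct.map (LinearMap.inl k X Y) (LinearMap.inl k X Y) =
      TensorProduct.map (LinearMap.inl k X Y) (LinearMap.inl k X Y) ∘ₗ R) ∧
  (Q ∘ₗ TensorProduct.map (LinearMap.inr k X Y) (LinearMap.inr k X Y) =
      TensorProduct.map (LinearMap.inr k X Y) (LinearMap.inr k X Y) ∘ₗ R') ∧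
  (Q ∘ₗ TensorProduct.map (LinearMap.inl k X Y) (LinearMap.inr k X Y) =
      TensorProduct.map (LinearMap.inr k X Y) (LinearMap.inl k X Y) ∘ₗ U) ∧
  (Q ∘ₗ TensorProduct.map (LinearMap.inr k X Y) (LinearMap.inl k X Y) =
      TensorProduct.map (LinearMap.inl k X Y) (LinearMap.inr k X Y) ∘ₗ S +
        TensorProduct.map (LinearMap.inr k X Y) (LinearMap.inl k X Y) ∘ₗ T)

end Conditions

/-!
The tensor cube of `X × Y` splits into the eight blocks `X ⊗ X ⊗ X, …, Y ⊗ Y ⊗ Y`, and a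
linear map out of it is determined by its restrictions to the blocks. Precomposed with a block
inclusion, `Q₁₂` and `Q₂₃` become block inclusions postcomposed with `R`, `R'`, `U` or `S + T`
acting on two factors. Restricted to a block, each side of the braid relation for `Q` thus
becomes a sum of triple products sorted by target block, and matching the components gives the
braid relations for `R`, `R'` and the conditions (I)–(VI)'. Only on `Y ⊗ X ⊗ X` and
`Y ⊗ Y ⊗ X` do two paths reach the same target block, which is why (VI) and (VI)' have two
terms on one side.
-/

theorem braid_iff {k : Type*} [Field k] {V : Type*} [AddCommGroup V] [Module k V]
    (Q : V ⊗[k] V →ₗ[k] V ⊗[k] V) :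
    Braid Q ↔ one2 Q ∘ₗ two3 Q ∘ₗ one2 Q = two3 Q ∘ₗ one2 Q ∘ₗ two3 Q :=
  Iff.rfl

section Naturality

variable {k : Type*} [Field k]
  {A B C D A' B' C' D' C'' D'' E E' V : Type*}
  [AddCommGroup A] [Module k A] [AddCommGroup B] [Module k B]
  [AddCommGroup C] [Module k C] [AddCommGroup D] [Module k D]
  [AddCommGroup A'] [Module k A'] [AddCommGroup B'] [Module k B']
  [AddCommGroup C'] [Module k C'] [AddCommGroup D'] [Module k D']
  [AddCommGroup C''] [Module k C''] [AddCommGroup D''] [Module k D'']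
  [AddCommGroup E] [Module k E] [AddCommGroup E'] [Module k E'] [AddCommGroup V] [Module k V]
  {f : A ⊗[k] B →ₗ[k] C ⊗[k] D}
  {g : A' ⊗[k] B' →ₗ[k] C' ⊗[k] D'} {g' : A' ⊗[k] B' →ₗ[k] C'' ⊗[k] D''}
  {a : A' →ₗ[k] A} {b : B' →ₗ[k] B}
  {c : C' →ₗ[k] C} {d : D' →ₗ[k] D} {c' : C'' →ₗ[k] C} {d' : D'' →ₗ[k] D}

theorem one2_comp_map_map (h : f ∘ₗ map a b = map c d ∘ₗ g) (e : E' →ₗ[k] E) :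
    one2 f ∘ₗ map (map a b) e = map (map c d) e ∘ₗ one2 g := by
  rw [one2, one2, rTensor_comp_map, h, map_comp_rTensor]

theorem one2_comp_map_map_of_eq_add
    (h : f ∘ₗ map a b = map c d ∘ₗ g + map c' d' ∘ₗ g') (e : E' →ₗ[k] E) :
    one2 f ∘ₗ map (map a b) e =
      map (map c d) e ∘ₗ one2 g + map (map c' d') e ∘ₗ one2 g' := by
  rw [one2, one2, one2, rTensor_comp_map, h, map_comp_rTensor, map_comp_rTensor, map_add_left]

theorem two3_comp_map_map (h : f ∘ₗ map a b = map c d ∘ₗ g) (e : E' →ₗ[k] E) :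
    two3 f ∘ₗ map (map e a) b = map (map e c) d ∘ₗ two3 g := by
  simp only [two3, comp_assoc, ← map_map_comp_assoc_eq]
  rw [← comp_assoc _ _ (lTensor E f), lTensor_comp_map, h, ← map_comp_lTensor]
  simp only [← comp_assoc, ← map_map_comp_assoc_symm_eq]

theorem two3_comp_map_map_of_eq_add
    (h : f ∘ₗ map a b = map c d ∘ₗ g + map c' d' ∘ₗ g') (e : E' →ₗ[k] E) :
    two3 f ∘ₗ map (map e a) b =
      map (map e c) d ∘ₗ two3 g + map (map e c') d' ∘ₗ two3 g' := by
  simp only [two3, comp_assoc, ← map_map_comp_assoc_eq]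
  rw [← comp_assoc _ _ (lTensor E f), lTensor_comp_map, h, map_add_right, ← map_comp_lTensor,
    ← map_comp_lTensor]
  simp only [add_comp, comp_add, ← comp_assoc, ← map_map_comp_assoc_symm_eq]

theorem one2_comp_map_map_assoc (h : f ∘ₗ map a b = map c d ∘ₗ g) (e : E' →ₗ[k] E)
    (Z : V →ₗ[k] (A' ⊗[k] B') ⊗[k] E') :
    one2 f ∘ₗ map (map a b) e ∘ₗ Z = map (map c d) e ∘ₗ one2 g ∘ₗ Z := by
  rw [← comp_assoc, one2_comp_map_map h, comp_assoc]

theorem one2_comp_map_map_of_eq_add_assoc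
    (h : f ∘ₗ map a b = map c d ∘ₗ g + map c' d' ∘ₗ g') (e : E' →ₗ[k] E)
    (Z : V →ₗ[k] (A' ⊗[k] B') ⊗[k] E') :
    one2 f ∘ₗ map (map a b) e ∘ₗ Z =
      map (map c d) e ∘ₗ one2 g ∘ₗ Z + map (map c' d') e ∘ₗ one2 g' ∘ₗ Z := by
  rw [← comp_assoc, one2_comp_map_map_of_eq_add h, add_comp, comp_assoc, comp_assoc]

theorem two3_comp_map_map_assoc (h : f ∘ₗ map a b = map c d ∘ₗ g) (e : E' →ₗ[k] E)
    (Z : V →ₗ[k] (E' ⊗[k] A') ⊗[k] B') :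
    two3 f ∘ₗ map (map e a) b ∘ₗ Z = map (map e c) d ∘ₗ two3 g ∘ₗ Z := by
  rw [← comp_assoc, two3_comp_map_map h, comp_assoc]

theorem two3_comp_map_map_of_eq_add_assoc
    (h : f ∘ₗ map a b = map c d ∘ₗ g + map c' d' ∘ₗ g') (e : E' →ₗ[k] E)
    (Z : V →ₗ[k] (E' ⊗[k] A') ⊗[k] B') :
    two3 f ∘ₗ map (map e a) b ∘ₗ Z =
      map (map e c) d ∘ₗ two3 g ∘ₗ Z + map (map e c') d' ∘ₗ two3 g' ∘ₗ Z := by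
  rw [← comp_assoc, two3_comp_map_map_of_eq_add h, add_comp, comp_assoc, comp_assoc]

end Naturality

section BlockExt

variable {k : Type*} [CommSemiring k] {X Y W : Type*}
  [AddCommMonoid X] [Module k X] [AddCommMonoid Y] [Module k Y] [AddCommMonoid W] [Module k W]

local notation "ιX" => LinearMap.inl k X Y
local notation "ιY" => LinearMap.inr k X Y

theorem prod_tensor_prod_tensor_prod_ext
    {L M : ((X × Y) ⊗[k] (X × Y)) ⊗[k] (X × Y) →ₗ[k] W}
    (hXXX : L ∘ₗ map (map ιX ιX) ιX = M ∘ₗ map (map ιX ιX) ιX)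
    (hXXY : L ∘ₗ map (map ιX ιX) ιY = M ∘ₗ map (map ιX ιX) ιY)
    (hXYX : L ∘ₗ map (map ιX ιY) ιX = M ∘ₗ map (map ιX ιY) ιX)
    (hXYY : L ∘ₗ map (map ιX ιY) ιY = M ∘ₗ map (map ιX ιY) ιY)
    (hYXX : L ∘ₗ map (map ιY ιX) ιX = M ∘ₗ map (map ιY ιX) ιX)
    (hYXY : L ∘ₗ map (map ιY ιX) ιY = M ∘ₗ map (map ιY ιX) ιY)
    (hYYX : L ∘ₗ map (map ιY ιY) ιX = M ∘ₗ map (map ιY ιY) ιX)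
    (hYYY : L ∘ₗ map (map ιY ιY) ιY = M ∘ₗ map (map ιY ιY) ιY) :
    L = M := by
  have hid : (LinearMap.id : X × Y →ₗ[k] X × Y) = ιX ∘ₗ fst k X Y + ιY ∘ₗ snd k X Y := by
    ext <;> simp
  calc L = L ∘ₗ map (map id id) id := by rw [map_id, map_id, comp_id]
    _ = M ∘ₗ map (map id id) id := by
      simp only [hid, map_add_left, map_add_right, map_comp, comp_add, ← comp_assoc, hXXX, hXXY,
        hXYX, hXYY, hYXX, hYXY, hYYX, hYYY]
    _ = M := by rw [map_id, map_id, comp_id]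

end BlockExt

namespace IsGenGlue

variable {k : Type*} [Field k] {X Y : Type*}
  [AddCommGroup X] [Module k X] [AddCommGroup Y] [Module k Y]
  {R : X ⊗[k] X →ₗ[k] X ⊗[k] X} {R' : Y ⊗[k] Y →ₗ[k] Y ⊗[k] Y}
  {U : X ⊗[k] Y →ₗ[k] Y ⊗[k] X} {S : Y ⊗[k] X →ₗ[k] X ⊗[k] Y}
  {T : Y ⊗[k] X →ₗ[k] Y ⊗[k] X}
  {Q : (X × Y) ⊗[k] (X × Y) →ₗ[k] (X × Y) ⊗[k] (X × Y)}

local notation "ιX" => LinearMap.inl k X Y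
local notation "ιY" => LinearMap.inr k X Y

theorem braid_on_xxx (hQ : IsGenGlue R R' U S T Q) (hR : Braid R) :
    one2 Q ∘ₗ two3 Q ∘ₗ one2 Q ∘ₗ map (map ιX ιX) ιX =
      two3 Q ∘ₗ one2 Q ∘ₗ two3 Q ∘ₗ map (map ιX ιX) ιX := by
  obtain ⟨hXX, -, -, -⟩ := hQ
  simp only [one2_comp_map_map hXX, one2_comp_map_map_assoc hXX, two3_comp_map_map hXX,
    two3_comp_map_map_assoc hXX]
  rw [(braid_iff R).1 hR]

theorem braid_on_xxy (hQ : IsGenGlue R R' U S T Q) (h1 : CondI R U) :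
    one2 Q ∘ₗ two3 Q ∘ₗ one2 Q ∘ₗ map (map ιX ιX) ιY =
      two3 Q ∘ₗ one2 Q ∘ₗ two3 Q ∘ₗ map (map ιX ιX) ιY := by
  obtain ⟨hXX, -, hXY, -⟩ := hQ
  simp only [one2_comp_map_map hXX, two3_comp_map_map_assoc hXX, one2_comp_map_map_assoc hXY,
    two3_comp_map_map hXY, two3_comp_map_map_assoc hXY]
  rw [h1]

theorem braid_on_xyx (hQ : IsGenGlue R R' U S T Q) (h3 : CondIII R U S) (h4 : CondIV R U T) :
    one2 Q ∘ₗ two3 Q ∘ₗ one2 Q ∘ₗ map (map ιX ιY) ιX =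
      two3 Q ∘ₗ one2 Q ∘ₗ two3 Q ∘ₗ map (map ιX ιY) ιX := by
  obtain ⟨hXX, -, hXY, hYX⟩ := hQ
  simp only [one2_comp_map_map_assoc hXX, two3_comp_map_map_assoc hXX, one2_comp_map_map hXY,
    one2_comp_map_map_assoc hXY, two3_comp_map_map_assoc hXY, one2_comp_map_map_of_eq_add_assoc hYX,
    two3_comp_map_map_of_eq_add hYX, comp_add]
  rw [h3, h4]

theorem braid_on_xyy (hQ : IsGenGlue R R' U S T Q) (h1' : CondI' R' U) :
    one2 Q ∘ₗ two3 Q ∘ₗ one2 Q ∘ₗ map (map ιX ιY) ιY =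
      two3 Q ∘ₗ one2 Q ∘ₗ two3 Q ∘ₗ map (map ιX ιY) ιY := by
  obtain ⟨-, hYY, hXY, -⟩ := hQ
  simp only [one2_comp_map_map_assoc hYY, two3_comp_map_map hYY, one2_comp_map_map hXY,
    one2_comp_map_map_assoc hXY, two3_comp_map_map_assoc hXY]
  rw [h1']

theorem braid_on_yxx (hQ : IsGenGlue R R' U S T Q)
    (h2 : CondII R S) (h5 : CondV R S T) (h6 : CondVI R U S T) :
    one2 Q ∘ₗ two3 Q ∘ₗ one2 Q ∘ₗ map (map ιY ιX) ιX =
      two3 Q ∘ₗ one2 Q ∘ₗ two3 Q ∘ₗ map (map ιY ιX) ιX := by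
  obtain ⟨hXX, -, hXY, hYX⟩ := hQ
  simp only [one2_comp_map_map_assoc hXX, two3_comp_map_map hXX, two3_comp_map_map_assoc hXX,
    one2_comp_map_map_assoc hXY, one2_comp_map_map_of_eq_add hYX,
    one2_comp_map_map_of_eq_add_assoc hYX, two3_comp_map_map_of_eq_add_assoc hYX, comp_add]
  rw [h2, h5, h6]
  simp only [comp_add]
  abel

theorem braid_on_yxy (hQ : IsGenGlue R R' U S T Q) (h3' : CondIII' R' U S) (h4' : CondIV' R' U T) :
    one2 Q ∘ₗ two3 Q ∘ₗ one2 Q ∘ₗ map (map ιY ιX) ιY =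
      two3 Q ∘ₗ one2 Q ∘ₗ two3 Q ∘ₗ map (map ιY ιX) ιY := by
  obtain ⟨-, hYY, hXY, hYX⟩ := hQ
  simp only [one2_comp_map_map_assoc hYY, two3_comp_map_map_assoc hYY, one2_comp_map_map_assoc hXY,
    two3_comp_map_map hXY, two3_comp_map_map_assoc hXY, one2_comp_map_map_of_eq_add hYX,
    two3_comp_map_map_of_eq_add_assoc hYX, comp_add]
  rw [h3', h4']

theorem braid_on_yyx (hQ : IsGenGlue R R' U S T Q)
    (h2' : CondII' R' S) (h5' : CondV' R' S T) (h6' : CondVI' R' U S T) :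
    one2 Q ∘ₗ two3 Q ∘ₗ one2 Q ∘ₗ map (map ιY ιY) ιX =
      two3 Q ∘ₗ one2 Q ∘ₗ two3 Q ∘ₗ map (map ιY ιY) ιX := by
  obtain ⟨-, hYY, hXY, hYX⟩ := hQ
  simp only [one2_comp_map_map hYY, one2_comp_map_map_assoc hYY, two3_comp_map_map_assoc hYY,
    two3_comp_map_map_assoc hXY, one2_comp_map_map_of_eq_add_assoc hYX,
    two3_comp_map_map_of_eq_add hYX, two3_comp_map_map_of_eq_add_assoc hYX, comp_add]
  rw [h2', h5', h6']
  simp only [comp_add]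
  abel

theorem braid_on_yyy (hQ : IsGenGlue R R' U S T Q) (hR' : Braid R') :
    one2 Q ∘ₗ two3 Q ∘ₗ one2 Q ∘ₗ map (map ιY ιY) ιY =
      two3 Q ∘ₗ one2 Q ∘ₗ two3 Q ∘ₗ map (map ιY ιY) ιY := by
  obtain ⟨-, hYY, -, -⟩ := hQ
  simp only [one2_comp_map_map hYY, one2_comp_map_map_assoc hYY, two3_comp_map_map hYY,
    two3_comp_map_map_assoc hYY]
  rw [(braid_iff R').1 hR']

end IsGenGlue

theorem stmt4_general {k : Type*} [Field k] {X Y : Type*}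
    [AddCommGroup X] [Module k X] [AddCommGroup Y] [Module k Y]
    (R : X ⊗[k] X →ₗ[k] X ⊗[k] X) (R' : Y ⊗[k] Y →ₗ[k] Y ⊗[k] Y)
    (U : X ⊗[k] Y →ₗ[k] Y ⊗[k] X) (S : Y ⊗[k] X →ₗ[k] X ⊗[k] Y)
    (T : Y ⊗[k] X →ₗ[k] Y ⊗[k] X)
    (hRbraid : Braid R) (hR'braid : Braid R')
    (h1 : CondI R U) (h1' : CondI' R' U)
    (h2 : CondII R S) (h2' : CondII' R' S)
    (h3 : CondIII R U S) (h3' : CondIII' R' U S)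
    (h4 : CondIV R U T) (h4' : CondIV' R' U T)
    (h5 : CondV R S T) (h5' : CondV' R' S T)
    (h6 : CondVI R U S T) (h6' : CondVI' R' U S T)
    (Q : (X × Y) ⊗[k] (X × Y) →ₗ[k] (X × Y) ⊗[k] (X × Y))
    (hQ : IsGenGlue R R' U S T Q) :
    Braid Q :=
  (braid_iff Q).2 <| prod_tensor_prod_tensor_prod_ext (hQ.braid_on_xxx hRbraid)
    (hQ.braid_on_xxy h1) (hQ.braid_on_xyx h3 h4) (hQ.braid_on_xyy h1') (hQ.braid_on_yxx h2 h5 h6)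
    (hQ.braid_on_yxy h3' h4') (hQ.braid_on_yyx h2' h5' h6') (hQ.braid_on_yyy hR'braid)

/-- if the compatibility conditions (I)–(VI)' hold for
`R, R', U, S, T` (with `R, R'` Yang-Baxter operators and `U, S` invertible),
then `Q = R ⊕_{U,S,T} R'` satisfies the quantum Yang-Baxter equation. -/
theorem stmt4 {k : Type*} [Field k] {X Y : Type*}
    [AddCommGroup X] [Module k X] [AddCommGroup Y] [Module k Y]
    (R : X ⊗[k] X →ₗ[k] X ⊗[k] X) (R' : Y ⊗[k] Y →ₗ[k] Y ⊗[k] Y)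
    (U : X ⊗[k] Y →ₗ[k] Y ⊗[k] X) (S : Y ⊗[k] X →ₗ[k] X ⊗[k] Y)
    (T : Y ⊗[k] X →ₗ[k] Y ⊗[k] X)
    (hRbij : Function.Bijective R) (hR'bij : Function.Bijective R')
    (hUbij : Function.Bijective U) (hSbij : Function.Bijective S)
    (hRbraid : Braid R) (hR'braid : Braid R')
    (h1 : CondI R U) (h1' : CondI' R' U)
    (h2 : CondII R S) (h2' : CondII' R' S)
    (h3 : CondIII R U S) (h3' : CondIII' R' U S)
    (h4 : CondIV R U T) (h4' : CondIV' R' U T)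
    (h5 : CondV R S T) (h5' : CondV' R' S T)
    (h6 : CondVI R U S T) (h6' : CondVI' R' U S T)
    (Q : (X × Y) ⊗[k] (X × Y) →ₗ[k] (X × Y) ⊗[k] (X × Y))
    (hQ : IsGenGlue R R' U S T Q) :
    Braid Q :=
  stmt4_general R R' U S T hRbraid hR'braid h1 h1' h2 h2' h3 h3' h4 h4' h5 h5' h6 h6' Q hQ
end

section
/- Setting b = c = 0 induces a well-defined bialgebra surjection A(R ⊕_q R') → A(R) ⊗ A(R'), where blocks a, d of the glued quantum matrix map to the generators of A(R) and A(R') respectively. -/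
open scoped TensorProduct

section

variable {k : Type*} [Field k] {ι : Type*} [Fintype ι] [DecidableEq ι]

/-- `R₁₂ = R ⊗ 1` as a matrix on the threefold tensor product. -/
def pos12 (M : Matrix (ι × ι) (ι × ι) k) : Matrix (ι × ι × ι) (ι × ι × ι) k :=
  fun x y => M (x.1, x.2.1) (y.1, y.2.1) * (if x.2.2 = y.2.2 then 1 else 0)

/-- `R₁₃`, acting on the first and third tensor factors. -/
def pos13 (M : Matrix (ι × ι) (ι × ι) k) : Matrix (ι × ι × ι) (ι × ι × ι) k :=
  fun x y => M (x.1, x.2.2) (y.1, y.2.2) * (if x.2.1 = y.2.1 then 1 else 0)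

/-- `R₂₃ = 1 ⊗ R` as a matrix on the threefold tensor product. -/
def pos23 (M : Matrix (ι × ι) (ι × ι) k) : Matrix (ι × ι × ι) (ι × ι × ι) k :=
  fun x y => M (x.2.1, x.2.2) (y.2.1, y.2.2) * (if x.1 = y.1 then 1 else 0)

/-- The quantum Yang-Baxter equation `R₁₂R₁₃R₂₃ = R₂₃R₁₃R₁₂` in matrix form. -/
def MatrixQYBE (M : Matrix (ι × ι) (ι × ι) k) : Prop :=
  pos12 M * pos13 M * pos23 M = pos23 M * pos13 M * pos12 M

/-- The flip matrix `P(x⊗y) = y⊗x`. -/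
def flipMat' : Matrix (ι × ι) (ι × ι) k :=
  fun p r => if p.1 = r.2 ∧ p.2 = r.1 then 1 else 0

/-- `M` is the matrix of a `q`-Hecke Yang-Baxter operator: it satisfies the
QYBE, is invertible, and its braiding `Ř = P∘M` satisfies `(Ř−q)(Ř+q⁻¹)=0`. -/
def IsHeckeYB (q : k) (M : Matrix (ι × ι) (ι × ι) k) : Prop :=
  MatrixQYBE M ∧ IsUnit M ∧
    (flipMat' * M - q • (1 : Matrix (ι × ι) (ι × ι) k)) *
      (flipMat' * M + q⁻¹ • (1 : Matrix (ι × ι) (ι × ι) k)) = 0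

end

/-- The glued R-matrix `R ⊕_q R'` (in numeric R-matrix form, with blocks
`R`, `1`, `(q−q⁻¹)P`, `1`, `R'` as in the paper). -/
def glueRmat {k : Type*} [Field k] (q : k) {α β : Type*} [DecidableEq α] [DecidableEq β]
    (R : Matrix (α × α) (α × α) k) (R' : Matrix (β × β) (β × β) k) :
    Matrix ((α ⊕ β) × (α ⊕ β)) ((α ⊕ β) × (α ⊕ β)) k :=
  fun p r =>
    match p, r with
    | (.inl i, .inl k'), (.inl j, .inl l) => R (i, k') (j, l)
    | (.inr i, .inr k'), (.inr j, .inr l) => R' (i, k') (j, l)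
    | (.inl i, .inr k'), (.inl j, .inr l) => if i = j ∧ k' = l then 1 else 0
    | (.inr i, .inl k'), (.inr j, .inl l) => if i = j ∧ k' = l then 1 else 0
    | (.inl i, .inr k'), (.inr j, .inl l) => if i = l ∧ k' = j then q - q⁻¹ else 0
    | _, _ => 0

/-- The FRT relations of the quantum matrix bialgebra `A(R)`. -/
inductive FRTRel (k : Type*) [Field k] {α : Type*} [Fintype α]
    (R : Matrix (α × α) (α × α) k) :
    FreeAlgebra k (α × α) → FreeAlgebra k (α × α) → Prop
  | frt (i k' : α) (j l : α) :
      FRTRel k R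
        (∑ a : α, ∑ b : α,
          R (i, k') (a, b) • (FreeAlgebra.ι k (a, j) * FreeAlgebra.ι k (b, l)))
        (∑ a : α, ∑ b : α,
          R (a, b) (j, l) • (FreeAlgebra.ι k (k', b) * FreeAlgebra.ι k (i, a)))

/-- The FRT bialgebra `A(R)` as an algebra. -/
abbrev FRTAlg (k : Type*) [Field k] {α : Type*} [Fintype α]
    (R : Matrix (α × α) (α × α) k) :=
  RingQuot (FRTRel k R)

/-- The generator `t^i_j` of `A(R)`. -/
noncomputable def frtGen (k : Type*) [Field k] {α : Type*} [Fintype α]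
    (R : Matrix (α × α) (α × α) k) (i j : α) : FRTAlg k R :=
  RingQuot.mkAlgHom k (FRTRel k R) (FreeAlgebra.ι k (i, j))

/-!
The FRT relations `R T₁ T₂ = T₂ T₁ R` are preserved by algebra maps and by the matrix coproduct
`T ↦ (∑_c T_ic ⊗ T_cj)`, and the identity matrix satisfies them; this gives the coproduct and
counit of `A(R)`. For the glued matrix, the block-diagonal matrix `diag(T ⊗ 1, 1 ⊗ T')` satisfies
the relations of `R ⊕_q R'`: block by block they reduce to those of `A(R)`, of `A(R')`, and to
the commutation of `T ⊗ 1` with `1 ⊗ T'`, while every term carrying the `(q − q⁻¹)P` block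
contains an off-diagonal entry, which is zero. The induced map hits the generators of
`A(R) ⊗ A(R')`, and it intertwines coproducts and counits because all maps involved are algebra
maps that agree on generators.
-/

theorem Finset.sum_comm_pairs {M : Type*} [AddCommMonoid M] {α β γ δ : Type*}
    [Fintype α] [Fintype β] [Fintype γ] [Fintype δ] (f : α → β → γ → δ → M) :
    ∑ a, ∑ b, ∑ c, ∑ d, f a b c d = ∑ c, ∑ d, ∑ a, ∑ b, f a b c d := by
  simpa only [Fintype.sum_prod_type] using
    Finset.sum_comm (s := univ) (t := univ)
      (f := fun (p : α × β) (q : γ × δ) => f p.1 p.2 q.1 q.2)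

section TensorBialgebra

variable {k A B : Type*} [CommSemiring k] [Semiring A] [Algebra k A] [Semiring B] [Algebra k B]

noncomputable def tensorComul (Δ : A →ₐ[k] A ⊗[k] A) (Δ' : B →ₐ[k] B ⊗[k] B) :
    A ⊗[k] B →ₐ[k] (A ⊗[k] B) ⊗[k] (A ⊗[k] B) :=
  (Algebra.TensorProduct.tensorTensorTensorComm k k k k A A B B).toAlgHom.comp
    (Algebra.TensorProduct.map Δ Δ')

theorem tensorComul_tmul (Δ : A →ₐ[k] A ⊗[k] A) (Δ' : B →ₐ[k] B ⊗[k] B) (a : A) (b : B) :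
    tensorComul Δ Δ' (a ⊗ₜ b) = Algebra.TensorProduct.tensorTensorTensorComm k k k k A A B B
      (Δ a ⊗ₜ Δ' b) :=
  rfl

noncomputable def tensorCounit (ε : A →ₐ[k] k) (ε' : B →ₐ[k] k) : A ⊗[k] B →ₐ[k] k :=
  (Algebra.TensorProduct.lid k k).toAlgHom.comp (Algebra.TensorProduct.map ε ε')

theorem tensorCounit_tmul (ε : A →ₐ[k] k) (ε' : B →ₐ[k] k) (a : A) (b : B) :
    tensorCounit ε ε' (a ⊗ₜ b) = ε a * ε' b :=
  rfl

end TensorBialgebra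

section FRTMatrix

variable {k : Type*} [Field k] {α : Type*} [Fintype α]
  {B C : Type*} [Semiring B] [Algebra k B] [Semiring C] [Algebra k C]

def IsFRTMatrix (R : Matrix (α × α) (α × α) k) (T : α → α → B) : Prop :=
  ∀ i k' j l : α,
    ∑ a, ∑ b, R (i, k') (a, b) • (T a j * T b l) = ∑ a, ∑ b, R (a, b) (j, l) • (T k' b * T i a)

variable {R : Matrix (α × α) (α × α) k}

theorem isFRTMatrix_frtGen : IsFRTMatrix R (frtGen k R) := fun i k' j l => by
  simpa only [map_sum, map_smul, map_mul, frtGen] using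
    RingQuot.mkAlgHom_rel k (FRTRel.frt (R := R) i k' j l)

theorem IsFRTMatrix.map {T : α → α → B} (hT : IsFRTMatrix R T) (f : B →ₐ[k] C) :
    IsFRTMatrix R fun i j => f (T i j) := fun i k' j l => by
  simpa only [map_sum, map_smul, map_mul] using congrArg f (hT i k' j l)

theorem isFRTMatrix_one [DecidableEq α] :
    IsFRTMatrix R fun i j => if i = j then (1 : B) else 0 := by
  intro i k' j l
  simp [mul_ite, Finset.sum_ite_eq, Finset.sum_ite_eq']

theorem IsFRTMatrix.tmul {S : α → α → B} {T : α → α → C} (hS : IsFRTMatrix R S)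
    (hT : IsFRTMatrix R T) : IsFRTMatrix R fun i j => ∑ c, S i c ⊗ₜ[k] T c j := by
  intro i k' j l
  calc ∑ a, ∑ b, R (i, k') (a, b) • ((∑ c, S a c ⊗ₜ[k] T c j) * ∑ d, S b d ⊗ₜ[k] T d l)
      = ∑ c, ∑ d, (∑ a, ∑ b, R (i, k') (a, b) • (S a c * S b d)) ⊗ₜ[k] (T c j * T d l) := by
        simp only [Finset.sum_mul_sum, Algebra.TensorProduct.tmul_mul_tmul, Finset.smul_sum,
          TensorProduct.sum_tmul, TensorProduct.smul_tmul']
        rw [Finset.sum_comm_pairs]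
    _ = ∑ c, ∑ d, (∑ a, ∑ b, R (a, b) (c, d) • (S k' b * S i a)) ⊗ₜ[k] (T c j * T d l) := by
        simp only [hS i k']
    _ = ∑ b, ∑ a, (S k' b * S i a) ⊗ₜ[k] (∑ c, ∑ d, R (a, b) (c, d) • (T c j * T d l)) := by
        simp only [TensorProduct.sum_tmul, TensorProduct.tmul_sum, TensorProduct.smul_tmul',
          TensorProduct.tmul_smul]
        rw [Finset.sum_comm_pairs, Finset.sum_comm]
    _ = ∑ b, ∑ a, (S k' b * S i a) ⊗ₜ[k] (∑ c, ∑ d, R (c, d) (j, l) • (T b d * T a c)) := by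
        simp only [hT _ _ j l]
    _ = ∑ a, ∑ b, R (a, b) (j, l) • ((∑ c, S k' c ⊗ₜ[k] T c b) * ∑ d, S i d ⊗ₜ[k] T d a) := by
        simp only [Finset.sum_mul_sum, Algebra.TensorProduct.tmul_mul_tmul, Finset.smul_sum,
          TensorProduct.tmul_sum, TensorProduct.tmul_smul]
        rw [Finset.sum_comm_pairs]

theorem IsFRTMatrix.fromBlocks [DecidableEq α] {β : Type*} [Fintype β] [DecidableEq β] (q : k)
    {R' : Matrix (β × β) (β × β) k} {S : α → α → C} {T : β → β → C} (hS : IsFRTMatrix R S)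
    (hT : IsFRTMatrix R' T) (hST : ∀ i j a b, Commute (S i j) (T a b)) :
    IsFRTMatrix (glueRmat q R R') fun I J => Matrix.fromBlocks (.of S) 0 0 (.of T) I J := by
  rintro (i | i) (k' | k') (j | j) (l | l) <;>
    simp only [Fintype.sum_sum_type, Matrix.fromBlocks_apply₁₁, Matrix.fromBlocks_apply₁₂,
      Matrix.fromBlocks_apply₂₁, Matrix.fromBlocks_apply₂₂, Matrix.of_apply, Matrix.zero_apply,
      mul_zero, zero_mul, smul_zero, Finset.sum_const_zero, add_zero, zero_add] <;>
    simp only [glueRmat, ite_smul, one_smul, zero_smul, ite_and, Finset.sum_ite_eq,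
      Finset.sum_ite_eq', Finset.sum_ite_irrel, Finset.mem_univ, if_true, Finset.sum_const_zero]
  · exact hS i k' j l
  · exact hST i j k' l
  · exact (hST k' l i j).symm
  · exact hT i k' j l

end FRTMatrix

namespace FRTAlg

variable {k : Type*} [Field k] {α : Type*} [Fintype α] {B : Type*} [Semiring B] [Algebra k B]
  (R : Matrix (α × α) (α × α) k)

noncomputable def lift (T : α → α → B) (hT : IsFRTMatrix R T) : FRTAlg k R →ₐ[k] B :=
  RingQuot.liftAlgHom k ⟨FreeAlgebra.lift k fun p => T p.1 p.2, by
    rintro _ _ ⟨i, k', j, l⟩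
    simpa only [map_sum, map_smul, map_mul, FreeAlgebra.lift_ι_apply] using hT i k' j l⟩

@[simp]
theorem lift_frtGen (T : α → α → B) (hT : IsFRTMatrix R T) (i j : α) :
    lift R T hT (frtGen k R i j) = T i j := by
  simp [lift, frtGen, RingQuot.liftAlgHom_mkAlgHom_apply]

theorem adjoin_range_frtGen :
    Algebra.adjoin k (Set.range (Function.uncurry (frtGen k R))) = ⊤ := by
  have : Set.range (Function.uncurry (frtGen k R)) =
      RingQuot.mkAlgHom k (FRTRel k R) '' Set.range (FreeAlgebra.ι k) := by
    rw [← Set.range_comp]; rfl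
  rw [this, ← AlgHom.map_adjoin, FreeAlgebra.adjoin_range_ι, Algebra.map_top,
    AlgHom.range_eq_top]
  exact RingQuot.mkAlgHom_surjective k _

variable {R}

theorem hom_ext {f g : FRTAlg k R →ₐ[k] B} (h : ∀ i j, f (frtGen k R i j) = g (frtGen k R i j)) :
    f = g :=
  AlgHom.ext_of_adjoin_eq_top (adjoin_range_frtGen R) (by rintro _ ⟨⟨i, j⟩, rfl⟩; exact h i j)

theorem range_le {f : FRTAlg k R →ₐ[k] B} {S : Subalgebra k B}
    (h : ∀ i j, f (frtGen k R i j) ∈ S) : f.range ≤ S := by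
  rw [← Algebra.map_top, ← adjoin_range_frtGen R, AlgHom.map_adjoin, Algebra.adjoin_le_iff]
  rintro _ ⟨_, ⟨⟨i, j⟩, rfl⟩, rfl⟩
  exact h i j

variable (R)

noncomputable def comul : FRTAlg k R →ₐ[k] FRTAlg k R ⊗[k] FRTAlg k R :=
  lift R _ (isFRTMatrix_frtGen.tmul isFRTMatrix_frtGen)

theorem comul_frtGen (i j : α) :
    comul R (frtGen k R i j) = ∑ a, frtGen k R i a ⊗ₜ frtGen k R a j :=
  lift_frtGen ..

noncomputable def counit [DecidableEq α] : FRTAlg k R →ₐ[k] k :=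
  lift R _ isFRTMatrix_one

theorem counit_frtGen [DecidableEq α] (i j : α) :
    counit R (frtGen k R i j) = if i = j then 1 else 0 :=
  lift_frtGen ..

theorem tensorComul_frtGen_tmul_one {β : Type*} [Fintype β] (R' : Matrix (β × β) (β × β) k)
    (i j : α) :
    tensorComul (comul R) (comul R') (frtGen k R i j ⊗ₜ[k] (1 : FRTAlg k R')) =
      ∑ a, (frtGen k R i a ⊗ₜ[k] (1 : FRTAlg k R')) ⊗ₜ[k] (frtGen k R a j ⊗ₜ[k] 1) := by
  simp [tensorComul_tmul, comul_frtGen, Algebra.TensorProduct.one_def,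
    TensorProduct.sum_tmul]

theorem tensorComul_one_tmul_frtGen {β : Type*} [Fintype β] (R' : Matrix (β × β) (β × β) k)
    (i j : β) :
    tensorComul (comul R) (comul R') ((1 : FRTAlg k R) ⊗ₜ[k] frtGen k R' i j) =
      ∑ a, ((1 : FRTAlg k R) ⊗ₜ[k] frtGen k R' i a) ⊗ₜ[k] (1 ⊗ₜ[k] frtGen k R' a j) := by
  simp [tensorComul_tmul, comul_frtGen, Algebra.TensorProduct.one_def,
    TensorProduct.tmul_sum]

theorem tensorCounit_frtGen_tmul_one [DecidableEq α] {β : Type*} [Fintype β] [DecidableEq β]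
    (R' : Matrix (β × β) (β × β) k) (i j : α) :
    tensorCounit (counit R) (counit R') (frtGen k R i j ⊗ₜ[k] (1 : FRTAlg k R')) =
      if i = j then 1 else 0 := by
  simp [tensorCounit_tmul, counit_frtGen]

theorem tensorCounit_one_tmul_frtGen [DecidableEq α] {β : Type*} [Fintype β] [DecidableEq β]
    (R' : Matrix (β × β) (β × β) k) (i j : β) :
    tensorCounit (counit R) (counit R') ((1 : FRTAlg k R) ⊗ₜ[k] frtGen k R' i j) =
      if i = j then 1 else 0 := by
  simp [tensorCounit_tmul, counit_frtGen]

end FRTAlg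

section Glue

open Algebra.TensorProduct (includeLeft includeRight)

variable {k : Type*} [Field k] {α β : Type*} [Fintype α] [DecidableEq α] [Fintype β]
  [DecidableEq β] (q : k) (R : Matrix (α × α) (α × α) k) (R' : Matrix (β × β) (β × β) k)

noncomputable def glueProj : FRTAlg k (glueRmat q R R') →ₐ[k] FRTAlg k R ⊗[k] FRTAlg k R' :=
  FRTAlg.lift _ _ <| (isFRTMatrix_frtGen.map includeLeft).fromBlocks q
    (isFRTMatrix_frtGen.map includeRight) fun _ _ _ _ =>
      (Commute.one_right _).tmul (Commute.one_left _)

@[simp]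
theorem glueProj_frtGen_inl_inl (i j : α) :
    glueProj q R R' (frtGen k _ (.inl i) (.inl j)) = frtGen k R i j ⊗ₜ 1 := by
  simp [glueProj]

@[simp]
theorem glueProj_frtGen_inr_inr (i j : β) :
    glueProj q R R' (frtGen k _ (.inr i) (.inr j)) = 1 ⊗ₜ frtGen k R' i j := by
  simp [glueProj]

@[simp]
theorem glueProj_frtGen_inl_inr (i : α) (j : β) :
    glueProj q R R' (frtGen k _ (.inl i) (.inr j)) = 0 := by
  simp [glueProj]

@[simp]
theorem glueProj_frtGen_inr_inl (i : β) (j : α) :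
    glueProj q R R' (frtGen k _ (.inr i) (.inl j)) = 0 := by
  simp [glueProj]

theorem glueProj_surjective : Function.Surjective (glueProj q R R') := by
  have h := Algebra.TensorProduct.map_range (AlgHom.id k (FRTAlg k R)) (AlgHom.id k (FRTAlg k R'))
  rw [Algebra.TensorProduct.map_id, Algebra.range_id] at h
  rw [← AlgHom.range_eq_top, eq_top_iff, h]
  exact sup_le (FRTAlg.range_le fun i j => ⟨_, glueProj_frtGen_inl_inl q R R' i j⟩)
    (FRTAlg.range_le fun i j => ⟨_, glueProj_frtGen_inr_inr q R R' i j⟩)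

theorem map_glueProj_comp_comul :
    (Algebra.TensorProduct.map (glueProj q R R') (glueProj q R R')).comp (FRTAlg.comul _) =
      (tensorComul (FRTAlg.comul R) (FRTAlg.comul R')).comp (glueProj q R R') :=
  FRTAlg.hom_ext fun I J => by
    rcases I with i | i <;> rcases J with j | j <;>
      simp [FRTAlg.comul_frtGen, Fintype.sum_sum_type, FRTAlg.tensorComul_frtGen_tmul_one,
        FRTAlg.tensorComul_one_tmul_frtGen]

theorem tensorCounit_comp_glueProj :
    (tensorCounit (FRTAlg.counit R) (FRTAlg.counit R')).comp (glueProj q R R') =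
      FRTAlg.counit _ :=
  FRTAlg.hom_ext fun I J => by
    rcases I with i | i <;> rcases J with j | j <;>
      simp [FRTAlg.counit_frtGen, FRTAlg.tensorCounit_frtGen_tmul_one,
        FRTAlg.tensorCounit_one_tmul_frtGen]

end Glue

theorem stmt16_general {k : Type*} [Field k] (q : k) {m n : ℕ}
    (R : Matrix ((Fin m) × (Fin m)) ((Fin m) × (Fin m)) k)
    (R' : Matrix ((Fin n) × (Fin n)) ((Fin n) × (Fin n)) k) :
    let G := glueRmat q R R'
    let t := frtGen k G
    let u : Fin m → Fin m → (FRTAlg k R ⊗[k] FRTAlg k R') :=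
      fun i j => frtGen k R i j ⊗ₜ[k] 1
    let v : Fin n → Fin n → (FRTAlg k R ⊗[k] FRTAlg k R') :=
      fun i j => 1 ⊗ₜ[k] frtGen k R' i j
    ∃ (Δ₁ : FRTAlg k G →ₐ[k] (FRTAlg k G ⊗[k] FRTAlg k G))
      (ε₁ : FRTAlg k G →ₐ[k] k)
      (Δ₂ : (FRTAlg k R ⊗[k] FRTAlg k R') →ₐ[k]
        ((FRTAlg k R ⊗[k] FRTAlg k R') ⊗[k] (FRTAlg k R ⊗[k] FRTAlg k R')))
      (ε₂ : (FRTAlg k R ⊗[k] FRTAlg k R') →ₐ[k] k)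
      (f : FRTAlg k G →ₐ[k] (FRTAlg k R ⊗[k] FRTAlg k R')),
      (∀ I J, Δ₁ (t I J) = ∑ K : Fin m ⊕ Fin n, t I K ⊗ₜ[k] t K J) ∧
      (∀ I J, ε₁ (t I J) = if I = J then 1 else 0) ∧
      (∀ i j, Δ₂ (u i j) = ∑ a : Fin m, u i a ⊗ₜ[k] u a j) ∧
      (∀ i j, Δ₂ (v i j) = ∑ a : Fin n, v i a ⊗ₜ[k] v a j) ∧
      (∀ i j, ε₂ (u i j) = if i = j then 1 else 0) ∧
      (∀ i j, ε₂ (v i j) = if i = j then 1 else 0) ∧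
      Function.Surjective f ∧
      (∀ (i j : Fin m), f (t (Sum.inl i) (Sum.inl j)) = u i j) ∧
      (∀ (i j : Fin n), f (t (Sum.inr i) (Sum.inr j)) = v i j) ∧
      (∀ (i : Fin m) (j : Fin n), f (t (Sum.inl i) (Sum.inr j)) = 0) ∧
      (∀ (i : Fin n) (j : Fin m), f (t (Sum.inr i) (Sum.inl j)) = 0) ∧
      (Algebra.TensorProduct.map f f).comp Δ₁ = Δ₂.comp f ∧
      ε₂.comp f = ε₁ := by
  intro G t u v
  exact ⟨FRTAlg.comul G, FRTAlg.counit G, tensorComul (FRTAlg.comul R) (FRTAlg.comul R'),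
    tensorCounit (FRTAlg.counit R) (FRTAlg.counit R'), glueProj q R R',
    FRTAlg.comul_frtGen G, FRTAlg.counit_frtGen G,
    FRTAlg.tensorComul_frtGen_tmul_one R R', FRTAlg.tensorComul_one_tmul_frtGen R R',
    FRTAlg.tensorCounit_frtGen_tmul_one R R', FRTAlg.tensorCounit_one_tmul_frtGen R R',
    glueProj_surjective q R R',
    glueProj_frtGen_inl_inl q R R', glueProj_frtGen_inr_inr q R R',
    glueProj_frtGen_inl_inr q R R', glueProj_frtGen_inr_inl q R R',
    map_glueProj_comp_comul q R R', tensorCounit_comp_glueProj q R R'⟩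

/-- setting `b = c = 0` induces a well-defined bialgebra
surjection `A(R ⊕_q R') → A(R) ⊗ A(R')`, sending the diagonal blocks `a`, `d`
of the glued quantum matrix to the generators of `A(R)` and `A(R')`. -/
theorem stmt16 {k : Type*} [Field k] (q : k) (hq : q ≠ 0) {m n : ℕ}
    (R : Matrix ((Fin m) × (Fin m)) ((Fin m) × (Fin m)) k)
    (R' : Matrix ((Fin n) × (Fin n)) ((Fin n) × (Fin n)) k)
    (hR : IsHeckeYB q R) (hR' : IsHeckeYB q R') :
    let G := glueRmat q R R'
    let t := frtGen k G
    let u : Fin m → Fin m → (FRTAlg k R ⊗[k] FRTAlg k R') :=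
      fun i j => frtGen k R i j ⊗ₜ[k] 1
    let v : Fin n → Fin n → (FRTAlg k R ⊗[k] FRTAlg k R') :=
      fun i j => 1 ⊗ₜ[k] frtGen k R' i j
    ∃ (Δ₁ : FRTAlg k G →ₐ[k] (FRTAlg k G ⊗[k] FRTAlg k G))
      (ε₁ : FRTAlg k G →ₐ[k] k)
      (Δ₂ : (FRTAlg k R ⊗[k] FRTAlg k R') →ₐ[k]
        ((FRTAlg k R ⊗[k] FRTAlg k R') ⊗[k] (FRTAlg k R ⊗[k] FRTAlg k R')))
      (ε₂ : (FRTAlg k R ⊗[k] FRTAlg k R') →ₐ[k] k)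
      (f : FRTAlg k G →ₐ[k] (FRTAlg k R ⊗[k] FRTAlg k R')),
      (∀ I J, Δ₁ (t I J) = ∑ K : Fin m ⊕ Fin n, t I K ⊗ₜ[k] t K J) ∧
      (∀ I J, ε₁ (t I J) = if I = J then 1 else 0) ∧
      (∀ i j, Δ₂ (u i j) = ∑ a : Fin m, u i a ⊗ₜ[k] u a j) ∧
      (∀ i j, Δ₂ (v i j) = ∑ a : Fin n, v i a ⊗ₜ[k] v a j) ∧
      (∀ i j, ε₂ (u i j) = if i = j then 1 else 0) ∧
      (∀ i j, ε₂ (v i j) = if i = j then 1 else 0) ∧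
      Function.Surjective f ∧
      (∀ (i j : Fin m), f (t (Sum.inl i) (Sum.inl j)) = u i j) ∧
      (∀ (i j : Fin n), f (t (Sum.inr i) (Sum.inr j)) = v i j) ∧
      (∀ (i : Fin m) (j : Fin n), f (t (Sum.inl i) (Sum.inr j)) = 0) ∧
      (∀ (i : Fin n) (j : Fin m), f (t (Sum.inr i) (Sum.inl j)) = 0) ∧
      (Algebra.TensorProduct.map f f).comp Δ₁ = Δ₂.comp f ∧
      ε₂.comp f = ε₁ :=
  stmt16_general q R R'
end
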